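/- Preservation of demographic composition: for any school choice problem with advantaged and marginalized students, any stable-dominating matching ν, and any school s ∈ S, the number of advantaged and of marginalized students at s is the same as under DA: |ν⁻¹(s) ∩ Y| = |DA⁻¹_s(P) ∩ Y| and |ν⁻¹(s) ∩ Z| = |DA⁻¹_s(P) ∩ Z|. -/
import Mathlib


/-!
A school choice problem: finitely many students `I` and schools `S`
(with a distinguished null school of quota `|I|`).  Each student `i` has a
strict preference over schools represented by its rank function
`rk i : S → ℕ` (a bijection onto `{1, …, |S|}`, where rank 1 is the most
preferred school); each school `s` has a quota `quota s ≥ 1` and a strict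
priority over students represented by `prio s : I → ℕ`
(`i ▷_s j` iff `prio s i < prio s j`).
-/
structure SchoolChoice (I S : Type) [Fintype I] [Fintype S]
    [DecidableEq I] [DecidableEq S] where
  nullSchool : S
  quota : S → ℕ
  rk : I → S → ℕ
  prio : S → I → ℕ
  quota_pos : ∀ s : S, 1 ≤ quota s
  quota_null : quota nullSchool = Fintype.card I
  rk_inj : ∀ i : I, Function.Injective (rk i)
  rk_mem : ∀ (i : I) (s : S), rk i s ∈ Finset.Icc 1 (Fintype.card S)
  prio_inj : ∀ s : S, Function.Injective (prio s)

namespace SchoolChoice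

open scoped Classical

variable {I S : Type} [Fintype I] [Fintype S] [DecidableEq I] [DecidableEq S]

/-- `μ` is a matching: no school is assigned more students than its quota. -/
def IsMatching (P : SchoolChoice I S) (μ : I → S) : Prop :=
  ∀ s : S, (Finset.univ.filter fun i => μ i = s).card ≤ P.quota s

/-- Given the sets `R i` of schools that have rejected student `i` so far,
student `i` proposes to her most preferred school that has not rejected her. -/
noncomputable def propose (P : SchoolChoice I S) (R : I → Finset S) (i : I) : S :=
  if h : (Finset.univ \ R i).Nonempty then
    (Finset.exists_min_image (Finset.univ \ R i) (P.rk i) h).choose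
  else P.nullSchool

/-- At the DA round with rejection state `R`, school `s` rejects student `i`:
`i` applies to `s` and at least `quota s` applicants to `s` have higher priority. -/
def rejectsAt (P : SchoolChoice I S) (R : I → Finset S) (s : S) (i : I) : Prop :=
  P.propose R i = s ∧
    P.quota s ≤ (Finset.univ.filter fun j =>
      P.propose R j = s ∧ P.prio s j < P.prio s i).card

/-- One round of student-proposing Deferred Acceptance: record new rejections. -/
noncomputable def stepR (P : SchoolChoice I S) (R : I → Finset S) : I → Finset S :=
  fun i => R i ∪ (Finset.univ.filter fun s => P.rejectsAt R s i)

/-- Rejection state after `n` rounds of Deferred Acceptance. -/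
noncomputable def daR (P : SchoolChoice I S) : ℕ → I → Finset S
  | 0 => fun _ => (∅ : Finset S)
  | n + 1 => P.stepR (P.daR n)

/-- The outcome of the student-proposing Deferred Acceptance algorithm:
iterate rounds until no rejection occurs (which happens within
`|I|·|S| + 1` rounds); each student is matched to the school holding her. -/
noncomputable def DA (P : SchoolChoice I S) : I → S :=
  P.propose (P.daR (Fintype.card I * Fintype.card S + 1))

/-- A matching `ν` is stable-dominating if every student weakly prefers
`ν` to the DA outcome. -/
def StableDominating (P : SchoolChoice I S) (ν : I → S) : Prop :=
  P.IsMatching ν ∧ ∀ i : I, P.rk i (ν i) ≤ P.rk i (P.DA i)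

/-- Student `i` is unimprovable: every stable-dominating matching assigns `i`
to her DA school. -/
def Unimprovable (P : SchoolChoice I S) (i : I) : Prop :=
  ∀ ν : I → S, P.StableDominating ν → ν i = P.DA i

/-- Edge of the envy digraph `G^DA(P)`: `i` prefers `j`'s DA school to her own. -/
def Envy (P : SchoolChoice I S) (i j : I) : Prop :=
  P.rk i (P.DA j) < P.rk i (P.DA i)

/-- Student `i` lies on a directed cycle of the envy digraph `G^DA(P)`. -/
def OnCycle (P : SchoolChoice I S) (i : I) : Prop :=
  ∃ (m : ℕ) (c : ℕ → I), 0 < m ∧ c 0 = i ∧ c m = i ∧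
    ∀ k < m, P.Envy (c k) (c (k + 1))

/-- Student `i` desires school `s` in matching `μ`. -/
def Desires (P : SchoolChoice I S) (μ : I → S) (i : I) (s : S) : Prop :=
  P.rk i s < P.rk i (μ i)

/-- `μ` is non-wasteful: every desired school is filled to quota. -/
def NonWasteful (P : SchoolChoice I S) (μ : I → S) : Prop :=
  ∀ s : S, (∃ i : I, P.Desires μ i s) →
    (Finset.univ.filter fun i => μ i = s).card = P.quota s

/-- `μ` is stable: a non-wasteful matching with no priority violations. -/
def Stable (P : SchoolChoice I S) (μ : I → S) : Prop :=
  P.IsMatching μ ∧ P.NonWasteful μ ∧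
    ¬ ∃ (i j : I) (s : S), P.Desires μ i s ∧ μ j = s ∧ P.prio s i < P.prio s j

/-- `μ` Pareto-dominates `ν`. -/
def ParetoDominates (P : SchoolChoice I S) (μ ν : I → S) : Prop :=
  (∀ i : I, P.rk i (μ i) ≤ P.rk i (ν i)) ∧ ∃ i : I, P.rk i (μ i) < P.rk i (ν i)

/-- `μ` is a Pareto-efficient matching. -/
def ParetoEfficient (P : SchoolChoice I S) (μ : I → S) : Prop :=
  P.IsMatching μ ∧ ∀ ν : I → S, P.IsMatching ν → ¬ P.ParetoDominates ν μ

end SchoolChoice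

private lemma rank_count_lemma : ∀ (n : ℕ) (T : Finset ℕ) (q : ℕ), T.card = n → q ≤ n →
    q ≤ (T.filter fun x => (T.filter fun y => y < x).card < q).card := by
  intro n
  induction n with
  | zero => intro T q _ hq; omega
  | succ n ih =>
    intro T q hT hq
    rcases eq_or_lt_of_le hq with heq | hlt
    · have : T.filter (fun x => (T.filter fun y => y < x).card < q) = T := by
        apply Finset.filter_true_of_mem
        intro x hx
        have hsub : T.filter (fun y => y < x) ⊆ T.erase x := by
          intro y hy
          simp only [Finset.mem_filter] at hy
          exact Finset.mem_erase.2 ⟨by omega, hy.1⟩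
        have := Finset.card_le_card hsub
        have := Finset.card_erase_of_mem hx
        omega
      rw [this]; omega
    · have hne : T.Nonempty := Finset.card_pos.1 (by omega)
      set M := T.max' hne with hM
      have hMT : M ∈ T := T.max'_mem hne
      have hT' : (T.erase M).card = n := by
        rw [Finset.card_erase_of_mem hMT, hT]; omega
      have key : ∀ x ∈ T.erase M, T.filter (fun y => y < x) = (T.erase M).filter (fun y => y < x) := by
        intro x hx
        have hxM : x < M := by
          rcases Finset.mem_erase.1 hx with ⟨hne', hxT⟩
          exact lt_of_le_of_ne (T.le_max' x hxT) hne'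
        ext y
        simp only [Finset.mem_filter, Finset.mem_erase]
        constructor
        · rintro ⟨hyT, hyx⟩; exact ⟨⟨by omega, hyT⟩, hyx⟩
        · rintro ⟨⟨_, hyT⟩, hyx⟩; exact ⟨hyT, hyx⟩
      have hsub : (T.erase M).filter (fun x => ((T.erase M).filter fun y => y < x).card < q)
          ⊆ T.filter (fun x => (T.filter fun y => y < x).card < q) := by
        intro x hx
        rcases Finset.mem_filter.1 hx with ⟨hx1, hx2⟩
        refine Finset.mem_filter.2 ⟨Finset.mem_of_mem_erase hx1, ?_⟩
        rw [key x hx1]; exact hx2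
      have := ih (T.erase M) q hT' (by omega)
      have := Finset.card_le_card hsub
      omega

namespace SchoolChoice

open scoped Classical

variable {I S : Type} [Fintype I] [Fintype S] [DecidableEq I] [DecidableEq S]

lemma propose_spec (P : SchoolChoice I S) (R : I → Finset S) (i : I)
    (h : (Finset.univ \ R i).Nonempty) :
    P.propose R i ∈ Finset.univ \ R i ∧
      ∀ s ∈ Finset.univ \ R i, P.rk i (P.propose R i) ≤ P.rk i s := by
  rw [propose, dif_pos h]
  have := (Finset.exists_min_image (Finset.univ \ R i) (P.rk i) h).choose_spec
  exact this

lemma propose_congr (P : SchoolChoice I S) {R R' : I → Finset S} {i : I}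
    (h : R i = R' i) : P.propose R i = P.propose R' i := by
  simp only [propose, h]

lemma not_rejects_null (P : SchoolChoice I S) (R : I → Finset S) (i : I) :
    ¬ P.rejectsAt R P.nullSchool i := by
  rintro ⟨hp, hq⟩
  have hsub : (Finset.univ.filter fun j =>
      P.propose R j = P.nullSchool ∧ P.prio P.nullSchool j < P.prio P.nullSchool i)
      ⊆ Finset.univ.erase i := by
    intro j hj
    rcases Finset.mem_filter.1 hj with ⟨_, _, hlt⟩
    exact Finset.mem_erase.2 ⟨by rintro rfl; omega, Finset.mem_univ j⟩
  have h1 := Finset.card_le_card hsub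
  have h2 : (Finset.univ.erase i).card = Fintype.card I - 1 := by
    rw [Finset.card_erase_of_mem (Finset.mem_univ i), Finset.card_univ]
  have h3 : 1 ≤ Fintype.card I := Fintype.card_pos_iff.2 ⟨i⟩
  rw [P.quota_null] at hq
  omega

lemma null_not_mem_daR (P : SchoolChoice I S) (n : ℕ) (i : I) :
    P.nullSchool ∉ P.daR n i := by
  induction n with
  | zero => simp [daR]
  | succ n ih =>
    intro hmem
    rcases Finset.mem_union.1 hmem with h | h
    · exact ih h
    · exact P.not_rejects_null (P.daR n) i (Finset.mem_filter.1 h).2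

lemma daR_sdiff_nonempty (P : SchoolChoice I S) (n : ℕ) (i : I) :
    (Finset.univ \ P.daR n i).Nonempty :=
  ⟨P.nullSchool, Finset.mem_sdiff.2 ⟨Finset.mem_univ _, P.null_not_mem_daR n i⟩⟩

lemma daR_mono (P : SchoolChoice I S) (n : ℕ) (i : I) :
    P.daR n i ⊆ P.daR (n + 1) i := Finset.subset_union_left

lemma daR_fix_of_fix (P : SchoolChoice I S) {n : ℕ} (h : P.daR (n + 1) = P.daR n) :
    ∀ m, n ≤ m → P.daR m = P.daR n := by
  intro m hm
  induction m with
  | zero => have : n = 0 := by omega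
            subst this; rfl
  | succ m ih =>
    rcases Nat.lt_or_ge n (m + 1) with h' | h'
    · have hmn : n ≤ m := by omega
      have heq := ih hmn
      show P.stepR (P.daR m) = P.daR n
      rw [heq]; exact h
    · have : n = m + 1 := by omega
      subst this; rfl

lemma daR_eventually_fix (P : SchoolChoice I S) :
    P.daR (Fintype.card I * Fintype.card S + 1 + 1)
      = P.daR (Fintype.card I * Fintype.card S + 1) := by
  set N := Fintype.card I * Fintype.card S + 1 with hN
  by_cases hfix : ∃ n < N, P.daR (n + 1) = P.daR n
  · rcases hfix with ⟨n, hn, hfx⟩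
    rw [P.daR_fix_of_fix hfx N (by omega), P.daR_fix_of_fix hfx (N + 1) (by omega)]
  · push_neg at hfix
    have hgrow : ∀ n ≤ N, n ≤ ∑ i : I, (P.daR n i).card := by
      intro n
      induction n with
      | zero => omega
      | succ n ih =>
        intro hn
        have h1 := ih (by omega)
        have hne := hfix n (by omega)
        have : ∃ i, P.daR n i ≠ P.daR (n + 1) i := by
          by_contra hc
          push_neg at hc
          exact hne (funext fun i => (hc i).symm)
        rcases this with ⟨i, hi⟩
        have hstrict : ∑ j : I, (P.daR n j).card < ∑ j : I, (P.daR (n + 1) j).card := by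
          apply Finset.sum_lt_sum (fun j _ => Finset.card_le_card (P.daR_mono n j))
          exact ⟨i, Finset.mem_univ i,
            Finset.card_lt_card (Finset.ssubset_iff_subset_ne.2 ⟨P.daR_mono n i, hi⟩)⟩
        omega
    have hbound : ∑ i : I, (P.daR N i).card ≤ Fintype.card I * Fintype.card S := by
      calc ∑ i : I, (P.daR N i).card ≤ ∑ _i : I, Fintype.card S :=
            Finset.sum_le_sum fun i _ => Finset.card_le_univ _
        _ = Fintype.card I * Fintype.card S := by
            rw [Finset.sum_const, Finset.card_univ, smul_eq_mul]
    have := hgrow N le_rfl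
    omega

lemma no_reject_final (P : SchoolChoice I S) (s : S) (i : I) :
    ¬ P.rejectsAt (P.daR (Fintype.card I * Fintype.card S + 1)) s i := by
  set N := Fintype.card I * Fintype.card S + 1 with hN
  intro hrej
  have hmem : s ∈ P.daR (N + 1) i := by
    show s ∈ P.stepR (P.daR N) i
    exact Finset.mem_union_right _ (Finset.mem_filter.2 ⟨Finset.mem_univ s, hrej⟩)
  rw [P.daR_eventually_fix] at hmem
  have hspec := (P.propose_spec (P.daR N) i (P.daR_sdiff_nonempty N i)).1
  rw [hrej.1] at hspec
  exact (Finset.mem_sdiff.1 hspec).2 hmem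

lemma DA_matching (P : SchoolChoice I S) : P.IsMatching P.DA := by
  intro s
  by_contra hcon
  push_neg at hcon
  set T := Finset.univ.filter fun i => P.DA i = s with hT
  have hne : T.Nonempty := Finset.card_pos.1 (by have := P.quota_pos s; omega)
  rcases Finset.exists_max_image T (P.prio s) hne with ⟨i, hiT, hmax⟩
  have hsub : T.erase i ⊆ Finset.univ.filter fun j =>
      P.propose (P.daR (Fintype.card I * Fintype.card S + 1)) j = s ∧
        P.prio s j < P.prio s i := by
    intro j hj
    rcases Finset.mem_erase.1 hj with ⟨hji, hjT⟩
    have hj2 := (Finset.mem_filter.1 hjT).2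
    refine Finset.mem_filter.2 ⟨Finset.mem_univ j, hj2, ?_⟩
    exact lt_of_le_of_ne (hmax j hjT) fun h => hji (P.prio_inj s h)
  have hrej : P.rejectsAt (P.daR (Fintype.card I * Fintype.card S + 1)) s i := by
    refine ⟨(Finset.mem_filter.1 hiT).2, ?_⟩
    have h1 := Finset.card_le_card hsub
    have h2 : (T.erase i).card = T.card - 1 := Finset.card_erase_of_mem hiT
    omega
  exact P.no_reject_final s i hrej

/-- Persistence of rejection pressure across one DA round. -/
lemma reject_persist (P : SchoolChoice I S) (R : I → Finset S) (s : S) (c : ℕ)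
    (h : P.quota s ≤ (Finset.univ.filter fun j =>
      P.propose R j = s ∧ P.prio s j < c).card) :
    P.quota s ≤ (Finset.univ.filter fun j =>
      P.propose (P.stepR R) j = s ∧ P.prio s j < c).card := by
  set TI := Finset.univ.filter fun j => P.propose R j = s ∧ P.prio s j < c with hTI
  set T := TI.image (P.prio s) with hTmap
  have hcardT : T.card = TI.card :=
    Finset.card_image_of_injective _ (P.prio_inj s)
  -- for j ∈ TI, the count of smaller-prio proposers equals count in T
  have hcount : ∀ j ∈ TI, (Finset.univ.filter fun k =>
      P.propose R k = s ∧ P.prio s k < P.prio s j).card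
        = (T.filter fun y => y < P.prio s j).card := by
    intro j hj
    have hjc : P.prio s j < c := (Finset.mem_filter.1 hj).2.2
    have himg : T.filter (fun y => y < P.prio s j)
        = (TI.filter fun k => P.prio s k < P.prio s j).image (P.prio s) := by
      rw [hTmap, Finset.filter_image]
    rw [himg, Finset.card_image_of_injective _ (P.prio_inj s)]
    congr 1
    ext k
    simp only [Finset.mem_filter, hTI, Finset.mem_univ, true_and]
    constructor
    · rintro ⟨hp, hlt⟩; exact ⟨⟨hp, by omega⟩, hlt⟩
    · rintro ⟨⟨hp, _⟩, hlt⟩; exact ⟨hp, hlt⟩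
  -- good set: members of TI not rejected by s
  have hmain := rank_count_lemma T.card T (P.quota s) rfl (by omega)
  -- the filter on T is the image of the good set
  have hgood : (T.filter fun x => (T.filter fun y => y < x).card < P.quota s)
      = (TI.filter fun j => (T.filter fun y => y < P.prio s j).card < P.quota s).image
          (P.prio s) := by
    rw [hTmap, Finset.filter_image]
  set G := TI.filter fun j => (T.filter fun y => y < P.prio s j).card < P.quota s with hG
  have hGcard : P.quota s ≤ G.card := by
    rw [hgood, Finset.card_image_of_injective _ (P.prio_inj s)] at hmain
    exact hmain
  have hGsub : G ⊆ Finset.univ.filter fun j =>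
      P.propose (P.stepR R) j = s ∧ P.prio s j < c := by
    intro j hj
    rcases Finset.mem_filter.1 hj with ⟨hjTI, hjcnt⟩
    rcases Finset.mem_filter.1 hjTI with ⟨_, hjp, hjc⟩
    have hnotrej : ¬ P.rejectsAt R s j := by
      rintro ⟨_, hq⟩
      rw [hcount j hjTI] at hq
      omega
    have hstep : P.stepR R j = R j := by
      rw [stepR]
      have : (Finset.univ.filter fun s' => P.rejectsAt R s' j) = ∅ := by
        apply Finset.filter_false_of_mem
        intro s' _ hrej
        have : s' = s := by rw [← hrej.1, hjp]
        exact hnotrej (this ▸ hrej)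
      rw [this, Finset.union_empty]
    refine Finset.mem_filter.2 ⟨Finset.mem_univ j, ?_, hjc⟩
    rw [P.propose_congr hstep, hjp]
  calc P.quota s ≤ G.card := hGcard
    _ ≤ _ := Finset.card_le_card hGsub

lemma reject_invariant (P : SchoolChoice I S) (n : ℕ) (s : S) (i : I)
    (h : s ∈ P.daR n i) :
    P.quota s ≤ (Finset.univ.filter fun j =>
      P.propose (P.daR n) j = s ∧ P.prio s j < P.prio s i).card := by
  induction n with
  | zero => simp [daR] at h
  | succ n ih =>
    have hstep : P.daR (n + 1) = P.stepR (P.daR n) := rfl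
    rcases Finset.mem_union.1 h with h' | h'
    · exact hstep ▸ P.reject_persist (P.daR n) s (P.prio s i) (ih h')
    · have hrej := (Finset.mem_filter.1 h').2
      exact hstep ▸ P.reject_persist (P.daR n) s (P.prio s i) hrej.2

/-- If `i` strictly prefers `s` to her DA school, then `s` is exactly full under
DA and every student assigned to `s` has strictly higher priority than `i`. -/
lemma DA_stability (P : SchoolChoice I S) (i : I) (s : S)
    (h : P.rk i s < P.rk i (P.DA i)) :
    (Finset.univ.filter fun j => P.DA j = s).card = P.quota s ∧
      ∀ j, P.DA j = s → P.prio s j < P.prio s i := by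
  set N := Fintype.card I * Fintype.card S + 1 with hN
  have hmem : s ∈ P.daR N i := by
    by_contra hcon
    have hle := (P.propose_spec (P.daR N) i (P.daR_sdiff_nonempty N i)).2 s
      (Finset.mem_sdiff.2 ⟨Finset.mem_univ s, hcon⟩)
    have hDA : P.DA i = P.propose (P.daR N) i := rfl
    rw [hDA] at h
    omega
  have hinv := P.reject_invariant N s i hmem
  have hsub : (Finset.univ.filter fun j => P.DA j = s ∧ P.prio s j < P.prio s i)
      ⊆ Finset.univ.filter fun j => P.DA j = s :=
    Finset.filter_subset_filter _ (fun j hj => hj) |>.trans (by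
      intro j hj
      rcases Finset.mem_filter.1 hj with ⟨h1, h2, _⟩
      exact Finset.mem_filter.2 ⟨h1, h2⟩)
  have hmatch := P.DA_matching s
  have hinv' : P.quota s ≤ (Finset.univ.filter fun j =>
      P.DA j = s ∧ P.prio s j < P.prio s i).card := hinv
  have hcards : (Finset.univ.filter fun j => P.DA j = s ∧ P.prio s j < P.prio s i).card
      ≤ (Finset.univ.filter fun j => P.DA j = s).card := Finset.card_le_card hsub
  refine ⟨by omega, ?_⟩
  have heq : (Finset.univ.filter fun j => P.DA j = s ∧ P.prio s j < P.prio s i)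
      = Finset.univ.filter fun j => P.DA j = s :=
    Finset.eq_of_subset_of_card_le hsub (by omega)
  intro j hj
  have : j ∈ Finset.univ.filter fun j => P.DA j = s :=
    Finset.mem_filter.2 ⟨Finset.mem_univ j, hj⟩
  rw [← heq] at this
  exact (Finset.mem_filter.1 this).2.2

end SchoolChoice

/-- Preservation of demographic composition: for any
stable-dominating matching `ν` and any school `s`, the numbers of advantaged
and of marginalized students at `s` are the same as under DA. -/
theorem composition_preservation {I S : Type} [Fintype I] [Fintype S]
    [DecidableEq I] [DecidableEq S] (P : SchoolChoice I S)
    (Y Z : Finset I) (hY : Y.Nonempty) (hZ : Z.Nonempty)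
    (hdisj : Disjoint Y Z) (hcover : Y ∪ Z = Finset.univ)
    (hprio : ∀ s : S, ∀ y ∈ Y, ∀ z ∈ Z, P.prio s y < P.prio s z)
    (ν : I → S) (hν : P.StableDominating ν) (s : S) :
    (Finset.univ.filter fun i => ν i = s ∧ i ∈ Y).card
        = (Finset.univ.filter fun i => P.DA i = s ∧ i ∈ Y).card ∧
      (Finset.univ.filter fun i => ν i = s ∧ i ∈ Z).card
        = (Finset.univ.filter fun i => P.DA i = s ∧ i ∈ Z).card := by
  classical
  obtain ⟨hmatch, hdom⟩ := hν
  have hYZ : ∀ i : I, i ∉ Y ↔ i ∈ Z := by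
    intro i
    constructor
    · intro hni
      have : i ∈ Y ∪ Z := hcover ▸ Finset.mem_univ i
      rcases Finset.mem_union.1 this with h | h
      · exact absurd h hni
      · exact h
    · intro hz hy
      exact Finset.disjoint_left.1 hdisj hy hz
  -- strict improvement gives stability facts
  have hstrict : ∀ i : I, ν i ≠ P.DA i → P.rk i (ν i) < P.rk i (P.DA i) := by
    intro i hne
    have h1 := hdom i
    have h2 : P.rk i (ν i) ≠ P.rk i (P.DA i) := fun h => hne (P.rk_inj i h)
    omega
  -- per-school totals : ν count ≤ DA count
  have htot : ∀ t : S, (Finset.univ.filter fun i => ν i = t).card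
      ≤ (Finset.univ.filter fun i => P.DA i = t).card := by
    intro t
    by_cases hmv : ∃ i, ν i = t ∧ P.DA i ≠ t
    · obtain ⟨i, hit, hne⟩ := hmv
      have hs := P.DA_stability i t (by
        have := hstrict i (by rw [hit]; exact fun h => hne h.symm)
        rw [hit] at this; exact this)
      rw [hs.1]
      exact hmatch t
    · push_neg at hmv
      apply Finset.card_le_card
      intro i hi
      rcases Finset.mem_filter.1 hi with ⟨_, hit⟩
      exact Finset.mem_filter.2 ⟨Finset.mem_univ i, hmv i hit⟩
  -- per-school Y counts : ν count ≤ DA count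
  have htotY : ∀ t : S, (Finset.univ.filter fun i => ν i = t ∧ i ∈ Y).card
      ≤ (Finset.univ.filter fun i => P.DA i = t ∧ i ∈ Y).card := by
    intro t
    by_cases hmv : ∃ y, y ∈ Y ∧ ν y = t ∧ P.DA y ≠ t
    · obtain ⟨y, hyY, hyt, hne⟩ := hmv
      have hs := P.DA_stability y t (by
        have := hstrict y (by rw [hyt]; exact fun h => hne h.symm)
        rw [hyt] at this; exact this)
      -- every DA student of t is in Y
      have hDAY : ∀ j, P.DA j = t → j ∈ Y := by
        intro j hj
        by_contra hnj
        have hjZ := (hYZ j).1 hnj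
        have := hprio t y hyY j hjZ
        have := hs.2 j hj
        omega
      have h1 : (Finset.univ.filter fun i => P.DA i = t ∧ i ∈ Y)
          = Finset.univ.filter fun i => P.DA i = t := by
        ext i
        simp only [Finset.mem_filter, Finset.mem_univ, true_and]
        exact ⟨fun h => h.1, fun h => ⟨h, hDAY i h⟩⟩
      have h2 : (Finset.univ.filter fun i => ν i = t ∧ i ∈ Y).card
          ≤ (Finset.univ.filter fun i => ν i = t).card :=
        Finset.card_le_card (fun i hi => Finset.mem_filter.2
          ⟨Finset.mem_univ i, (Finset.mem_filter.1 hi).2.1⟩)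
      have h3 := hmatch t
      rw [h1, hs.1]
      omega
    · push_neg at hmv
      apply Finset.card_le_card
      intro i hi
      rcases Finset.mem_filter.1 hi with ⟨_, hit, hiY⟩
      exact Finset.mem_filter.2 ⟨Finset.mem_univ i, hmv i hiY hit, hiY⟩
  -- fiberwise sums over all schools agree
  have hsumfib : ∀ μ : I → S, ∀ W : Finset I,
      ∑ t : S, (Finset.univ.filter fun i => μ i = t ∧ i ∈ W).card = W.card := by
    intro μ W
    have hW : ∀ t : S, (Finset.univ.filter fun i => μ i = t ∧ i ∈ W)
        = W.filter fun i => μ i = t := by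
      intro t; ext i
      simp only [Finset.mem_filter, Finset.mem_univ, true_and]
      tauto
    simp only [hW]
    exact (Finset.card_eq_sum_card_fiberwise fun x _ => Finset.mem_univ (μ x)).symm
  have hsumtot : ∀ μ : I → S,
      ∑ t : S, (Finset.univ.filter fun i => μ i = t).card = Fintype.card I := by
    intro μ
    rw [← Finset.card_univ]
    exact (Finset.card_eq_sum_card_fiberwise fun x _ => Finset.mem_univ (μ x)).symm
  -- pointwise ≤ with equal sums forces equality
  have hptwise : ∀ (f g : S → ℕ), (∀ t, f t ≤ g t) → (∑ t : S, f t = ∑ t : S, g t) →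
      ∀ t, f t = g t := by
    intro f g hle hsum t
    by_contra hne
    have hlt : f t < g t := lt_of_le_of_ne (hle t) hne
    have : ∑ u : S, f u < ∑ u : S, g u :=
      Finset.sum_lt_sum (fun u _ => hle u) ⟨t, Finset.mem_univ t, hlt⟩
    omega
  have hYeq : ∀ t, (Finset.univ.filter fun i => ν i = t ∧ i ∈ Y).card
      = (Finset.univ.filter fun i => P.DA i = t ∧ i ∈ Y).card :=
    hptwise _ _ htotY (by rw [hsumfib ν Y, hsumfib P.DA Y])
  have hTeq : ∀ t, (Finset.univ.filter fun i => ν i = t).card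
      = (Finset.univ.filter fun i => P.DA i = t).card :=
    hptwise _ _ htot (by rw [hsumtot ν, hsumtot P.DA])
  refine ⟨hYeq s, ?_⟩
  -- split total into Y and Z parts
  have hsplit : ∀ μ : I → S,
      (Finset.univ.filter fun i => μ i = s ∧ i ∈ Y).card
        + (Finset.univ.filter fun i => μ i = s ∧ i ∈ Z).card
      = (Finset.univ.filter fun i => μ i = s).card := by
    intro μ
    have := Finset.card_filter_add_card_filter_not
      (s := Finset.univ.filter fun i => μ i = s) (p := fun i => i ∈ Y)
    rw [Finset.filter_filter, Finset.filter_filter] at this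
    have hZ' : (Finset.univ.filter fun i => μ i = s ∧ i ∉ Y)
        = Finset.univ.filter fun i => μ i = s ∧ i ∈ Z := by
      ext i
      simp only [Finset.mem_filter, Finset.mem_univ, true_and, hYZ i]
    rw [hZ'] at this
    exact this
  have h1 := hsplit ν
  have h2 := hsplit P.DA
  have h3 := hYeq s
  have h4 := hTeq s
  omega
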